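/- arXiv:math/0004142 — 6 statements merged into one kernel-verified Lean document; each statement's English description precedes it below -/
import Mathlib

section
/- Let T ⊆ ℤ_{≥0}^n be a set satisfying property (i) (downward closure: if a, b ∈ ℤ_{≥0}^n with a − b ∈ ℤ_{≥0}^n and a ∈ T, then b ∈ T). Then the set B(T) of standard pairs of T is finite. -/
open MvPolynomial

def vsupp {n : ℕ} (a : Fin n → ℕ) : Set (Fin n) := {i | a i ≠ 0}

def vcell {n : ℕ} (l : Set (Fin n)) : Set (Fin n → ℕ) := {a | vsupp a ⊆ l}

def vslice {n : ℕ} (r : Fin n → ℕ) (l : Set (Fin n)) : Set (Fin n → ℕ) :=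
  (fun a => r + a) '' vcell l

def IsStdPair {n : ℕ} (T : Set (Fin n → ℕ)) (r : Fin n → ℕ) (l : Set (Fin n)) : Prop :=
  Disjoint (vsupp r) l ∧ vslice r l ⊆ T ∧
    ∀ (r' : Fin n → ℕ) (l' : Set (Fin n)), Disjoint (vsupp r') l' → vslice r' l' ⊆ T →
      vslice r l ⊆ vslice r' l' → vslice r l = vslice r' l'

def DownClosed {n : ℕ} (T : Set (Fin n → ℕ)) : Prop :=
  ∀ a b : Fin n → ℕ, (∀ i, b i ≤ a i) → a ∈ T → b ∈ T

def vtoZ {n : ℕ} (a : Fin n → ℕ) : Fin n → ℤ := fun i => (a i : ℤ)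

def fiber {n : ℕ} (K : AddSubgroup (Fin n → ℤ)) (S : Set (Fin n → ℕ))
    (q : (Fin n → ℤ) ⧸ K) : Set (Fin n → ℕ) :=
  {a ∈ S | (QuotientAddGroup.mk (vtoZ a) : (Fin n → ℤ) ⧸ K) = q}

def PropII {n : ℕ} (K : AddSubgroup (Fin n → ℤ)) (T : Set (Fin n → ℕ)) : Prop :=
  ∀ (g : Fin n → ℕ) (q : (Fin n → ℤ) ⧸ K),
    ((fun a => g + a) '' fiber K T q) ∩ T = ∅ ∨ ((fun a => g + a) '' fiber K T q) ⊆ T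

noncomputable def xmono {n : ℕ} (a : Fin n → ℕ) : MvPolynomial (Fin n) ℂ :=
  monomial (Finsupp.equivFunOnFinite.symm a) 1

def TofI {n : ℕ} (I : Ideal (MvPolynomial (Fin n) ℂ)) : Set (Fin n → ℕ) :=
  {a | xmono a ∉ I}

def IsBinomialIdeal {n : ℕ} (I : Ideal (MvPolynomial (Fin n) ℂ)) : Prop :=
  ∃ S : Set (MvPolynomial (Fin n) ℂ), I = Ideal.span S ∧
    ∀ f ∈ S, ∃ (a b : Fin n → ℕ) (la lb : ℂ), f = la • xmono a - lb • xmono b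

def KofI {n : ℕ} (I : Ideal (MvPolynomial (Fin n) ℂ)) : AddSubgroup (Fin n → ℤ) :=
  AddSubgroup.closure {v | ∃ a ∈ TofI I, ∃ b ∈ TofI I,
    (∃ la lb : ℂ, la ≠ 0 ∧ lb ≠ 0 ∧ la • xmono a - lb • xmono b ∈ I) ∧ v = vtoZ a - vtoZ b}

def IsSaturated {n : ℕ} (I : Ideal (MvPolynomial (Fin n) ℂ)) : Prop :=
  IsBinomialIdeal I ∧ ∀ a ∈ TofI I, ∀ b ∈ TofI I, vtoZ a - vtoZ b ∈ KofI I →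
    ∃ la lb : ℂ, la ≠ 0 ∧ lb ≠ 0 ∧ la • xmono a - lb • xmono b ∈ I

def Tl {n : ℕ} (T : Set (Fin n → ℕ)) (l : Set (Fin n)) : Set (Fin n → ℕ) :=
  {a | ∃ r, IsStdPair T r l ∧ a ∈ vslice r l}

def Tlbar {n : ℕ} (T : Set (Fin n → ℕ)) (l : Set (Fin n)) : Set (Fin n → ℕ) :=
  {a | ∃ r r', (∀ i, r i ≤ r' i) ∧ IsStdPair T r' l ∧ a ∈ vslice r l}

def IsMonomialIdeal {n : ℕ} (I : Ideal (MvPolynomial (Fin n) ℂ)) : Prop :=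
  ∃ S : Set (Fin n → ℕ), I = Ideal.span (xmono '' S)

def wdeg {n d : ℕ} (M : Matrix (Fin d) (Fin n) ℤ) (m : Fin n →₀ ℕ) : Fin d → ℤ :=
  M.mulVec fun i => (m i : ℤ)

noncomputable def homogComp {n d : ℕ} (M : Matrix (Fin d) (Fin n) ℤ) (q : Fin d → ℤ)
    (f : MvPolynomial (Fin n) ℂ) : MvPolynomial (Fin n) ℂ :=
  ∑ m ∈ f.support, if wdeg M m = q then monomial m (f.coeff m) else 0

noncomputable def degPart {n d : ℕ} (M : Matrix (Fin d) (Fin n) ℤ)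
    (I : Ideal (MvPolynomial (Fin n) ℂ)) (q : Fin d → ℤ) :
    Submodule ℂ (MvPolynomial (Fin n) ℂ ⧸ I) :=
  Submodule.span ℂ ((Ideal.Quotient.mk I) '' {f | ∀ m ∈ f.support, wdeg M m = q})

def IsAGraded {n d : ℕ} (M : Matrix (Fin d) (Fin n) ℤ)
    (I : Ideal (MvPolynomial (Fin n) ℂ)) : Prop :=
  (∀ f ∈ I, ∀ q : Fin d → ℤ, homogComp M q f ∈ I) ∧
  ∀ q : Fin d → ℤ,
    (q ∈ Set.range (fun a : Fin n → ℕ => M.mulVec (vtoZ a)) →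
      Module.finrank ℂ (degPart M I q) = 1) ∧
    (q ∉ Set.range (fun a : Fin n → ℕ => M.mulVec (vtoZ a)) →
      Module.finrank ℂ (degPart M I q) = 0)

noncomputable def htI {R : Type*} [CommRing R] (P : Ideal R) : ℕ∞ :=
  ⨆ (h : P.IsPrime), Order.height (⟨P, h⟩ : PrimeSpectrum R)

lemma dickson_aux {n : ℕ} (S : Set (Fin n → ℕ)) (hS : DownClosed S) :
    {r | r ∈ S ∧ ∀ i, ∃ k, r + Pi.single i k ∉ S}.Finite := by
  set F := {r | r ∈ S ∧ ∀ i, ∃ k, r + Pi.single i k ∉ S} with hF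
  by_contra hinf
  replace hinf : F.Infinite := hinf
  obtain ⟨g, hg⟩ := (Set.isPWO_of_wellQuasiOrderedLE F).exists_monotone_subseq (f := fun m => (Set.Infinite.natEmbedding F hinf m : Fin n → ℕ))
    (fun m => (Set.Infinite.natEmbedding F hinf m).2)
  set h : ℕ → Fin n → ℕ := (fun m => (Set.Infinite.natEmbedding F hinf m : Fin n → ℕ)) ∘ g with hh
  have hinj : Function.Injective h := by
    intro a b hab
    exact g.injective ((Set.Infinite.natEmbedding F hinf).injective (Subtype.ext hab))
  have hmemF : ∀ m, h m ∈ F := fun m => (Set.Infinite.natEmbedding F hinf (g m)).2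
  by_cases hb : ∀ i, ∃ B, ∀ m, h m i ≤ B
  · choose B hB using hb
    have : Set.range h ⊆ Set.univ.pi (fun i => Set.Iic (B i)) := by
      rintro _ ⟨m, rfl⟩ i _
      exact hB i m
    exact (Set.infinite_range_of_injective hinj)
      ((Set.Finite.pi (fun i => Set.finite_Iic (B i))).subset this)
  · push_neg at hb
    obtain ⟨i, hi⟩ := hb
    obtain ⟨k, hk⟩ := (hmemF 0).2 i
    obtain ⟨m, hm⟩ := hi (h 0 i + k)
    refine hk (hS (h m) _ ?_ (hmemF m).1)
    intro j
    rcases eq_or_ne j i with rfl | hji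
    · simpa using hm.le
    · simpa [Pi.single_eq_of_ne hji] using hg (Nat.zero_le m) j

/-- The auxiliary set `T'_l`. -/
def Tpr {n : ℕ} (T : Set (Fin n → ℕ)) (l : Set (Fin n)) : Set (Fin n → ℕ) :=
  {b | vsupp b ⊆ lᶜ ∧ vslice b l ⊆ T}

lemma Tpr_down {n : ℕ} (T : Set (Fin n → ℕ)) (hT : DownClosed T) (l : Set (Fin n)) :
    DownClosed (Tpr T l) := by
  intro a b hle ha
  constructor
  · intro i hi
    exact ha.1 (fun h0 => hi (Nat.le_zero.mp (h0 ▸ hle i)))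
  · rintro _ ⟨c, hc, rfl⟩
    exact hT (a + c) (b + c) (fun i => Nat.add_le_add_right (hle i) _)
      (ha.2 ⟨c, hc, rfl⟩)

lemma mem_vslice {n : ℕ} {r : Fin n → ℕ} {l : Set (Fin n)} {a : Fin n → ℕ} :
    a ∈ vslice r l ↔ ∃ c, vsupp c ⊆ l ∧ r + c = a := Iff.rfl

lemma std_mem {n : ℕ} (T : Set (Fin n → ℕ)) (hT : DownClosed T) (l : Set (Fin n))
    (r : Fin n → ℕ) (h : IsStdPair T r l) :
    r ∈ Tpr T l ∧ ∀ i, ∃ k, r + Pi.single i k ∉ Tpr T l := by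
  obtain ⟨hdisj, hsub, hmax⟩ := h
  have hrsupp : vsupp r ⊆ lᶜ := fun i hi hil => hdisj.le_bot ⟨hi, hil⟩
  refine ⟨⟨hrsupp, hsub⟩, fun i => ?_⟩
  by_cases hil : i ∈ l
  · refine ⟨1, fun hmem => ?_⟩
    have : i ∈ vsupp (r + Pi.single i 1) := by
      simp [vsupp, Pi.single_eq_same]
    exact hmem.1 this hil
  · by_contra hcon
    push_neg at hcon
    -- r0 = r with i-th coordinate zeroed
    set r0 : Fin n → ℕ := Function.update r i 0 with hr0
    have hr0supp : vsupp r0 ⊆ vsupp r \ {i} := by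
      intro j hj
      rcases eq_or_ne j i with rfl | hji
      · simp [vsupp, hr0, Function.update_self] at hj
      · exact ⟨by simpa [vsupp, hr0, Function.update_of_ne hji] using hj, hji⟩
    have hdisj0 : Disjoint (vsupp r0) (l ∪ {i}) := by
      rw [Set.disjoint_union_right]
      constructor
      · exact (hdisj.mono_left (hr0supp.trans Set.diff_subset))
      · rw [Set.disjoint_singleton_right]
        intro hi
        exact (hr0supp hi).2 rfl
    -- the bigger slice is contained in T
    have hbig : vslice r0 (l ∪ {i}) ⊆ T := by
      rintro _ ⟨c, hc, rfl⟩
      set c0 : Fin n → ℕ := Function.update c i 0 with hc0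
      have hc0l : vsupp c0 ⊆ l := by
        intro j hj
        rcases eq_or_ne j i with rfl | hji
        · simp [vsupp, hc0, Function.update_self] at hj
        · rcases hc (show j ∈ vsupp c by
            simpa [vsupp, hc0, Function.update_of_ne hji] using hj) with hjl | hjl
          · exact hjl
          · exact absurd hjl hji
      have hmem : (r + Pi.single i (c i)) + c0 ∈ T := by
        exact (hcon (c i)).2 ⟨c0, hc0l, rfl⟩
      refine hT _ _ (fun j => ?_) hmem
      rcases eq_or_ne j i with rfl | hji
      · simp [hr0, hc0, Function.update_self, Pi.single_eq_same]
      · simp [hr0, hc0, Function.update_of_ne hji, Pi.single_eq_of_ne hji]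
    -- vslice r l ⊆ bigger slice
    have hcontain : vslice r l ⊆ vslice r0 (l ∪ {i}) := by
      rintro _ ⟨c, hc, rfl⟩
      refine ⟨c + Pi.single i (r i), fun j hj => ?_, ?_⟩
      · rcases eq_or_ne j i with rfl | hji
        · exact Or.inr rfl
        · refine Or.inl (hc ?_)
          simpa [vsupp, Pi.single_eq_of_ne hji] using hj
      · funext j
        rcases eq_or_ne j i with rfl | hji
        · simp [hr0, Function.update_self, Pi.single_eq_same]
          ring
        · simp [hr0, Function.update_of_ne hji, Pi.single_eq_of_ne hji]
    have heq := hmax r0 (l ∪ {i}) hdisj0 hbig hcontain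
    -- derive contradiction: an element with larger i-th coordinate
    have hmem2 : r0 + Pi.single i (r i + 1) ∈ vslice r0 (l ∪ {i}) := by
      refine ⟨Pi.single i (r i + 1), fun j hj => ?_, rfl⟩
      rcases eq_or_ne j i with rfl | hji
      · exact Or.inr rfl
      · simp [vsupp, Pi.single_eq_of_ne hji] at hj
    rw [← heq] at hmem2
    obtain ⟨c, hc, hceq⟩ := hmem2
    have := congrFun hceq i
    have hci : c i = 0 := by
      by_contra h0
      exact hil (hc h0)
    simp [hr0, hci, Function.update_self, Pi.single_eq_same] at this

/-- If T ⊆ ℤ_{≥0}^n is downward closed, then the set B(T) of standard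
pairs of T is finite. -/
theorem stmt_0 {n : ℕ} (T : Set (Fin n → ℕ)) (hT : DownClosed T) :
    {p : (Fin n → ℕ) × Set (Fin n) | IsStdPair T p.1 p.2}.Finite := by
  have key : ∀ l : Set (Fin n), {r | IsStdPair T r l}.Finite := by
    intro l
    refine (dickson_aux (Tpr T l) (Tpr_down T hT l)).subset ?_
    intro r hr
    exact std_mem T hT l r hr
  have hsub : {p : (Fin n → ℕ) × Set (Fin n) | IsStdPair T p.1 p.2} ⊆
      ⋃ l : Set (Fin n), (fun r => (r, l)) '' {r | IsStdPair T r l} := by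
    intro p hp
    exact Set.mem_iUnion.2 ⟨p.2, ⟨p.1, hp, rfl⟩⟩
  exact (Set.finite_iUnion (fun l => ((key l).image _))).subset hsub
end

section
/- Let I ⊆ ℂ[x_1,…,x_n] be a saturated binomial ideal, let T = T(I) := {a ∈ ℤ_{≥0}^n | x^a ∉ I}, and let K = K(I). For q ∈ ℤ^n/K set T_q := {a ∈ T | a mod K = q}. Then for every g ∈ ℤ_{≥0}^n and every q ∈ ℤ^n/K, either (g + T_q) ∩ T = ∅ or g + T_q ⊆ T. -/
open MvPolynomial

lemma xmono_add {n : ℕ} (a b : Fin n → ℕ) : xmono (a + b) = xmono a * xmono b := by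
  rw [xmono, xmono, xmono, monomial_mul, one_mul]
  congr 2
  ext
  rfl

lemma mem_of_smul_sub_smul_mem {K A : Type*} [Field K] [CommRing A] [Algebra K A]
    {I : Ideal A} {x y : A} {c d : K} (hc : c ≠ 0) (h : c • x - d • y ∈ I) (hy : y ∈ I) :
    x ∈ I := by
  have hcx : c • x ∈ I := by
    simpa using I.add_mem h (Submodule.smul_of_tower_mem I d hy)
  simpa [smul_smul, inv_mul_cancel₀ hc] using Submodule.smul_of_tower_mem I c⁻¹ hcx

lemma sub_mem_of_mem_fiber {n : ℕ} {K : AddSubgroup (Fin n → ℤ)} {S : Set (Fin n → ℕ)}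
    {q : (Fin n → ℤ) ⧸ K} {a b : Fin n → ℕ} (ha : a ∈ fiber K S q) (hb : b ∈ fiber K S q) :
    vtoZ a - vtoZ b ∈ K := by
  rw [← QuotientAddGroup.eq_iff_sub_mem]
  exact ha.2.trans hb.2.symm

lemma add_mem_TofI_of_sub_mem_KofI {n : ℕ} {I : Ideal (MvPolynomial (Fin n) ℂ)}
    (hI : IsSaturated I) {a b : Fin n → ℕ} (ha : a ∈ TofI I) (hb : b ∈ TofI I)
    (hab : vtoZ a - vtoZ b ∈ KofI I) (g : Fin n → ℕ) (hga : g + a ∈ TofI I) :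
    g + b ∈ TofI I := by
  obtain ⟨la, lb, hla, -, hbinom⟩ := hI.2 a ha b hb hab
  have hshift : la • xmono (g + a) - lb • xmono (g + b) ∈ I := by
    rw [xmono_add, xmono_add, ← mul_smul_comm, ← mul_smul_comm, ← mul_sub]
    exact I.mul_mem_left _ hbinom
  exact fun hgb => hga (mem_of_smul_sub_smul_mem hla hshift hgb)

/-- For a saturated binomial ideal I, every shifted fiber g + T_q is
either disjoint from T = T(I) or contained in T. -/
theorem stmt_1 {n : ℕ} (I : Ideal (MvPolynomial (Fin n) ℂ)) (hI : IsSaturated I)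
    (g : Fin n → ℕ) (q : (Fin n → ℤ) ⧸ KofI I) :
    ((fun a => g + a) '' fiber (KofI I) (TofI I) q) ∩ TofI I = ∅ ∨
      ((fun a => g + a) '' fiber (KofI I) (TofI I) q) ⊆ TofI I := by
  rcases Set.eq_empty_or_nonempty (((fun a => g + a) '' fiber (KofI I) (TofI I) q) ∩ TofI I)
    with hempty | ⟨_, ⟨a, ha, rfl⟩, hga⟩
  · exact Or.inl hempty
  · refine Or.inr ?_
    rintro _ ⟨b, hb, rfl⟩
    exact add_mem_TofI_of_sub_mem_KofI hI ha.1 hb.1 (sub_mem_of_mem_fiber ha hb) g hga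
end

section
/- Let K ⊆ ℤ^n be a subgroup and T ⊆ ℤ_{≥0}^n a set satisfying property (i) (if a, b ∈ ℤ_{≥0}^n with a − b ∈ ℤ_{≥0}^n and a ∈ T, then b ∈ T) and property (ii) (for T_q := {a ∈ T | a mod K = q}: for all g ∈ ℤ_{≥0}^n and q ∈ ℤ^n/K, either (g + T_q) ∩ T = ∅ or g + T_q ⊆ T). If a, b ∈ T_p and g, h ∈ T_q (for p, q ∈ ℤ^n/K), then a + g ∈ T if and only if b + h ∈ T. -/
open MvPolynomial

theorem PropII.add_mem_of_add_mem {n : ℕ} {K : AddSubgroup (Fin n → ℤ)}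
    {T : Set (Fin n → ℕ)} (hT : PropII K T) (g : Fin n → ℕ) {q : (Fin n → ℤ) ⧸ K}
    {a b : Fin n → ℕ} (ha : a ∈ fiber K T q) (hb : b ∈ fiber K T q) (hga : g + a ∈ T) :
    g + b ∈ T := by
  obtain hdisj | hsub := hT g q
  · exact absurd hdisj (Set.nonempty_iff_ne_empty.mp ⟨g + a, ⟨a, ha, rfl⟩, hga⟩)
  · exact hsub ⟨b, hb, rfl⟩

theorem PropII.add_mem_iff {n : ℕ} {K : AddSubgroup (Fin n → ℤ)} {T : Set (Fin n → ℕ)}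
    (hT : PropII K T) (g : Fin n → ℕ) {q : (Fin n → ℤ) ⧸ K} {a b : Fin n → ℕ}
    (ha : a ∈ fiber K T q) (hb : b ∈ fiber K T q) : g + a ∈ T ↔ g + b ∈ T :=
  ⟨hT.add_mem_of_add_mem g ha hb, hT.add_mem_of_add_mem g hb ha⟩

theorem stmt_2_general {n : ℕ} (K : AddSubgroup (Fin n → ℤ)) (T : Set (Fin n → ℕ))
    (h2 : PropII K T) (p q : (Fin n → ℤ) ⧸ K)
    (a b g h : Fin n → ℕ) (ha : a ∈ fiber K T p) (hb : b ∈ fiber K T p)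
    (hg : g ∈ fiber K T q) (hh : h ∈ fiber K T q) :
    a + g ∈ T ↔ b + h ∈ T :=
  calc a + g ∈ T ↔ a + h ∈ T := h2.add_mem_iff a hg hh
    _ ↔ h + a ∈ T := by rw [add_comm]
    _ ↔ h + b ∈ T := h2.add_mem_iff h ha hb
    _ ↔ b + h ∈ T := by rw [add_comm]

/-- Under properties (i) and (ii), if a, b ∈ T_p and g, h ∈ T_q then
a + g ∈ T iff b + h ∈ T. -/
theorem stmt_2 {n : ℕ} (K : AddSubgroup (Fin n → ℤ)) (T : Set (Fin n → ℕ))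
    (h1 : DownClosed T) (h2 : PropII K T) (p q : (Fin n → ℤ) ⧸ K)
    (a b g h : Fin n → ℕ) (ha : a ∈ fiber K T p) (hb : b ∈ fiber K T p)
    (hg : g ∈ fiber K T q) (hh : h ∈ fiber K T q) :
    a + g ∈ T ↔ b + h ∈ T :=
  stmt_2_general K T h2 p q a b g h ha hb hg hh
end

section
/- Let I ⊆ ℂ[x_1,…,x_n] be a binomial ideal such that T := T(I) and K := K(I) satisfy property (i) (if a, b ∈ ℤ_{≥0}^n with a − b ∈ ℤ_{≥0}^n and a ∈ T, then b ∈ T) and property (ii) (for T_q := {a ∈ T | a mod K = q}: for all g ∈ ℤ_{≥0}^n and q ∈ ℤ^n/K, either (g + T_q) ∩ T = ∅ or g + T_q ⊆ T). Then I = ⋂_ℓ I^(ℓ), where the intersection runs over all ℓ ⊆ {1,…,n} for which some standard pair (r, ℓ) ∈ B(T) exists, and I^(ℓ) := I + ( x^a | a ∈ ℤ_{≥0}^n, a ∉ T̄(ℓ) ). -/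
open MvPolynomial

open scoped Classical


noncomputable def restr {n : ℕ} (C : Set (Fin n → ℕ)) (f : MvPolynomial (Fin n) ℂ) :
    MvPolynomial (Fin n) ℂ :=
  AddMonoidAlgebra.ofCoeff (@Finsupp.filter (Fin n →₀ ℕ) ℂ _ (fun m => (⇑m : Fin n → ℕ) ∈ C)
    (fun _ => Classical.dec _) (AddMonoidAlgebra.coeff f))

lemma coeff_restr {n : ℕ} (C : Set (Fin n → ℕ)) (f : MvPolynomial (Fin n) ℂ)
    (m : Fin n →₀ ℕ) : coeff m (restr C f) = if (⇑m : Fin n → ℕ) ∈ C then coeff m f else 0 := by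
  classical
  by_cases h : (⇑m : Fin n → ℕ) ∈ C <;>
    simp [restr, coeff, Finsupp.filter_apply, h]

@[simp] lemma coe_symm {n : ℕ} (a : Fin n → ℕ) :
    ⇑(Finsupp.equivFunOnFinite.symm a) = a := rfl

lemma coeff_xmono {n : ℕ} (a : Fin n → ℕ) (m : Fin n →₀ ℕ) :
    coeff m (xmono a) = if (⇑m : Fin n → ℕ) = a then 1 else 0 := by
  rw [xmono, coeff_monomial]
  congr 1
  simp only [eq_iff_iff]
  constructor
  · rintro rfl; rfl
  · intro h; rw [← h]; exact Finsupp.equivFunOnFinite_symm_coe m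

lemma ext_coeff {n : ℕ} {p q : MvPolynomial (Fin n) ℂ}
    (h : ∀ m, coeff m p = coeff m q) : p = q := MvPolynomial.ext _ _ h

lemma restr_add {n : ℕ} (C : Set (Fin n → ℕ)) (f g : MvPolynomial (Fin n) ℂ) :
    restr C (f + g) = restr C f + restr C g := by
  apply ext_coeff; intro m
  simp only [coeff_add, coeff_restr]
  split <;> simp

lemma restr_smul {n : ℕ} (C : Set (Fin n → ℕ)) (c : ℂ) (f : MvPolynomial (Fin n) ℂ) :
    restr C (c • f) = c • restr C f := by
  apply ext_coeff; intro m
  simp only [coeff_smul, coeff_restr]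
  split <;> simp

lemma restr_zero {n : ℕ} (C : Set (Fin n → ℕ)) : restr C (0 : MvPolynomial (Fin n) ℂ) = 0 := by
  apply ext_coeff; intro m
  simp only [coeff_restr, coeff_zero]; split <;> rfl

lemma restr_binom {n : ℕ} (C : Set (Fin n → ℕ)) (u v : Fin n → ℕ) (la lb : ℂ) :
    restr C (la • xmono u - lb • xmono v) =
      (if u ∈ C then la • xmono u else 0) - (if v ∈ C then lb • xmono v else 0) := by
  apply ext_coeff; intro m
  simp only [coeff_sub, coeff_restr, coeff_smul, coeff_xmono]
  by_cases hu : (⇑m : Fin n → ℕ) = u <;> by_cases hv : (⇑m : Fin n → ℕ) = v <;>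
    split_ifs <;>
    simp_all [coeff_smul, coeff_xmono, coeff_zero, coeff_sub]

lemma restr_compl_add {n : ℕ} (C : Set (Fin n → ℕ)) (f : MvPolynomial (Fin n) ℂ) :
    restr C f + restr Cᶜ f = f := by
  apply ext_coeff; intro m
  simp only [coeff_add, coeff_restr, Set.mem_compl_iff]
  split <;> simp_all

lemma mem_support_restr {n : ℕ} {C : Set (Fin n → ℕ)} {f : MvPolynomial (Fin n) ℂ}
    {m : Fin n →₀ ℕ} (h : m ∈ (restr C f).support) :
    (⇑m : Fin n → ℕ) ∈ C ∧ m ∈ f.support := by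
  rw [mem_support_iff] at h ⊢
  rw [coeff_restr] at h
  by_cases hc : (⇑m : Fin n → ℕ) ∈ C
  · exact ⟨hc, by simpa [hc] using h⟩
  · simp [hc] at h

lemma monomial_eq_smul_xmono {n : ℕ} (m : Fin n →₀ ℕ) (c : ℂ) :
    monomial m c = c • xmono (⇑m) := by
  rw [xmono]
  rw [Finsupp.equivFunOnFinite_symm_coe]
  rw [smul_monomial, smul_eq_mul, mul_one]

lemma xmono_mul {n : ℕ} (a b : Fin n → ℕ) : xmono a * xmono b = xmono (a + b) := by
  have h : Finsupp.equivFunOnFinite.symm (a + b) =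
      Finsupp.equivFunOnFinite.symm a + Finsupp.equivFunOnFinite.symm b := by
    apply Finsupp.ext; intro i; rfl
  rw [xmono, xmono, xmono, monomial_mul, one_mul, h]

section Main
variable {n : ℕ} (I : Ideal (MvPolynomial (Fin n) ℂ))

lemma xmono_mem_iff {a : Fin n → ℕ} : a ∈ TofI I ↔ xmono a ∉ I := Iff.rfl

lemma smulC_mem {c : ℂ} {f : MvPolynomial (Fin n) ℂ} (hf : f ∈ I) : c • f ∈ I := by
  rw [MvPolynomial.smul_eq_C_mul]
  exact I.mul_mem_left _ hf

lemma xmono_mem_of_smul {c : ℂ} (hc : c ≠ 0) {a : Fin n → ℕ}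
    (h : c • xmono a ∈ I) : xmono a ∈ I := by
  have := smulC_mem I (c := c⁻¹) h
  rwa [smul_smul, inv_mul_cancel₀ hc, one_smul] at this

/-- The set of binomials in I. -/
def BinomsIn : Set (MvPolynomial (Fin n) ℂ) :=
  {g | g ∈ I ∧ ∃ (a b : Fin n → ℕ) (la lb : ℂ), g = la • xmono a - lb • xmono b}

/-- Every element of a binomial ideal is a ℂ-linear combination of binomials in I. -/
lemma mem_span_binoms (hbin : IsBinomialIdeal I) {f : MvPolynomial (Fin n) ℂ} (hf : f ∈ I) :
    f ∈ Submodule.span ℂ (BinomsIn I) := by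
  obtain ⟨S, hS, hSbin⟩ := hbin
  -- key: the ℂ-span of BinomsIn is an ideal
  have key : ∀ (p g : MvPolynomial (Fin n) ℂ), g ∈ Submodule.span ℂ (BinomsIn I) →
      p * g ∈ Submodule.span ℂ (BinomsIn I) := by
    intro p g hg
    induction hg using Submodule.span_induction with
    | mem x hx =>
      obtain ⟨hxI, a, b, la, lb, rfl⟩ := hx
      -- p * binomial = sum over monomials of p
      rw [show p * (la • xmono a - lb • xmono b) =
          ∑ m ∈ p.support, monomial m (coeff m p) * (la • xmono a - lb • xmono b) by
        rw [← Finset.sum_mul, ← p.as_sum]]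
      apply Submodule.sum_mem
      intro m hm
      apply Submodule.subset_span
      constructor
      · exact I.mul_mem_left _ hxI
      · refine ⟨⇑m + a, ⇑m + b, coeff m p * la, coeff m p * lb, ?_⟩
        rw [monomial_eq_smul_xmono, mul_sub, smul_mul_smul_comm, smul_mul_smul_comm,
          xmono_mul, xmono_mul]
    | zero => simp [Submodule.zero_mem]
    | add x y _ _ hx hy => rw [mul_add]; exact Submodule.add_mem _ hx hy
    | smul c x _ hx =>
      rw [mul_smul_comm]
      exact Submodule.smul_mem _ _ hx
  rw [hS] at hf
  induction hf using Submodule.span_induction with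
  | mem x hx =>
    apply Submodule.subset_span
    refine ⟨?_, hSbin x hx⟩
    rw [hS]; exact Ideal.subset_span hx
  | zero => exact Submodule.zero_mem _
  | add x y _ _ hx hy => exact Submodule.add_mem _ hx hy
  | smul p x _ hx => rw [smul_eq_mul]; exact key p x hx

end Main

section Rel
variable {n : ℕ} (I : Ideal (MvPolynomial (Fin n) ℂ))

/-- Two exponents in T are related if a binomial with nonzero coefficients connects them. -/
def SimRel (u v : Fin n → ℕ) : Prop :=
  u ∈ TofI I ∧ v ∈ TofI I ∧
    ∃ la lb : ℂ, la ≠ 0 ∧ lb ≠ 0 ∧ la • xmono u - lb • xmono v ∈ I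

lemma simRel_refl {u : Fin n → ℕ} (hu : u ∈ TofI I) : SimRel I u u :=
  ⟨hu, hu, 1, 1, one_ne_zero, one_ne_zero, by simp⟩

lemma simRel_symm {u v : Fin n → ℕ} (h : SimRel I u v) : SimRel I v u := by
  obtain ⟨hu, hv, la, lb, hla, hlb, hI⟩ := h
  exact ⟨hv, hu, lb, la, hlb, hla, by
    have := I.neg_mem hI
    rwa [neg_sub] at this⟩

lemma simRel_trans {u v w : Fin n → ℕ} (h1 : SimRel I u v) (h2 : SimRel I v w) : SimRel I u w := by
  obtain ⟨hu, hv, lu, lv, hlu, hlv, hI1⟩ := h1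
  obtain ⟨_, hw, lv', lw, hlv', hlw, hI2⟩ := h2
  refine ⟨hu, hw, lv' * lu, lv * lw, mul_ne_zero hlv' hlu, mul_ne_zero hlv hlw, ?_⟩
  have key : (lv' * lu) • xmono u - (lv * lw) • xmono w =
      lv' • (lu • xmono u - lv • xmono v) + lv • (lv' • xmono v - lw • xmono w) := by
    module
  rw [key]
  exact I.add_mem (smulC_mem I hI1) (smulC_mem I hI2)

/-- Homogeneity: the restriction of an element of I to a Rel-class is in I. -/
lemma restr_class_mem (hbin : IsBinomialIdeal I) (a0 : Fin n → ℕ)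
    {f : MvPolynomial (Fin n) ℂ} (hf : f ∈ I) :
    restr {b | SimRel I a0 b} f ∈ I := by
  set C : Set (Fin n → ℕ) := {b | SimRel I a0 b} with hC
  have hspan := mem_span_binoms I hbin hf
  clear hf
  induction hspan using Submodule.span_induction with
  | mem g hg =>
    obtain ⟨hgI, u, v, la, lb, rfl⟩ := hg
    rw [restr_binom]
    -- case analysis
    by_cases hu : u ∈ C <;> by_cases hv : v ∈ C
    · rw [if_pos hu, if_pos hv]; exact hgI
    · rw [if_pos hu, if_neg hv, sub_zero]
      -- show la • xmono u ∈ I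
      rcases eq_or_ne la 0 with h0 | h0
      · rw [h0, zero_smul]; exact I.zero_mem
      rcases eq_or_ne lb 0 with h0' | h0'
      · -- g = la • xmono u ∈ I, so xmono u ∈ I, contradicting u ∈ C ⊆ T
        rw [h0', zero_smul, sub_zero] at hgI
        exact absurd (xmono_mem_of_smul I h0 hgI) hu.2.1
      · -- lb ≠ 0. If v ∈ T then SimRel u v, so v ∈ C, contradiction; so xmono v ∈ I.
        by_cases hvT : v ∈ TofI I
        · exact absurd (simRel_trans I hu ⟨hu.2.1, hvT, la, lb, h0, h0', hgI⟩) hv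
        · rw [xmono_mem_iff, not_not] at hvT
          have : la • xmono u = (la • xmono u - lb • xmono v) + lb • xmono v := by ring
          rw [this]
          exact I.add_mem hgI (smulC_mem I hvT)
    · rw [if_neg hu, if_pos hv, zero_sub]
      apply I.neg_mem
      rcases eq_or_ne lb 0 with h0 | h0
      · rw [h0, zero_smul]; exact I.zero_mem
      rcases eq_or_ne la 0 with h0' | h0'
      · rw [h0', zero_smul, zero_sub] at hgI
        have := I.neg_mem hgI; rw [neg_neg] at this
        exact this
      · by_cases huT : u ∈ TofI I
        · exact absurd (simRel_trans I hv (simRel_symm I ⟨huT, hv.2.1, la, lb, h0', h0, hgI⟩)) hu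
        · rw [xmono_mem_iff, not_not] at huT
          have : lb • xmono v = la • xmono u - (la • xmono u - lb • xmono v) := by ring
          rw [this]
          exact I.sub_mem (smulC_mem I huT) hgI
    · rw [if_neg hu, if_neg hv, sub_zero]; exact I.zero_mem
  | zero => rw [restr_zero]; exact I.zero_mem
  | add x y _ _ hx hy => rw [restr_add]; exact I.add_mem hx hy
  | smul c x _ hx => rw [restr_smul]; exact smulC_mem I hx

end Rel

section Supp
variable {n : ℕ}

lemma tlbar_of_add_mem {T : Set (Fin n → ℕ)} {l : Set (Fin n)} {b c : Fin n → ℕ}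
    (h : b + c ∈ Tlbar T l) : b ∈ Tlbar T l := by
  obtain ⟨r, r', hle, hstd, d, hd, he⟩ := h
  refine ⟨fun i => if i ∈ l then 0 else b i, r', ?_, hstd,
    fun i => if i ∈ l then b i else 0, ?_, ?_⟩
  · intro i
    by_cases hi : i ∈ l
    · simp [hi]
    · have hei := congrFun he i
      have hdi : d i = 0 := by
        by_contra hne
        exact hi (hd hne)
      have h2i := hle i
      simp only [Pi.add_apply, hdi, add_zero] at hei
      simp only [if_neg hi]
      omega
  · intro i hi
    by_contra h'
    simp only [vcell, vsupp, Set.mem_setOf_eq, if_neg h', ne_eq, not_true_eq_false] at hi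
  · funext i
    by_cases hi : i ∈ l <;> simp [Pi.add_apply, hi]

lemma support_span_xmono_notTlbar {T : Set (Fin n → ℕ)} {l : Set (Fin n)}
    {x : MvPolynomial (Fin n) ℂ}
    (hx : x ∈ Ideal.span {f | ∃ a, a ∉ Tlbar T l ∧ f = xmono a}) :
    ∀ m ∈ x.support, (⇑m : Fin n → ℕ) ∉ Tlbar T l := by
  classical
  set W : Ideal (MvPolynomial (Fin n) ℂ) :=
    { carrier := {f | ∀ m ∈ f.support, (⇑m : Fin n → ℕ) ∉ Tlbar T l}
      add_mem' := by
        intro p q hp hq m hm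
        have := Finsupp.support_add hm
        rcases Finset.mem_union.1 this with h | h
        · exact hp m h
        · exact hq m h
      zero_mem' := by
        intro m hm
        simp at hm
      smul_mem' := by
        intro p f hf m hm
        rw [smul_eq_mul] at hm
        have := MvPolynomial.support_mul p f hm
        rw [Finset.mem_add] at this
        obtain ⟨m1, hm1, m2, hm2, rfl⟩ := this
        intro hmem
        apply hf m2 hm2
        have : (⇑(m1 + m2) : Fin n → ℕ) = ⇑m2 + ⇑m1 := by
          funext i; simp [Finsupp.add_apply]; omega
        rw [this] at hmem
        exact tlbar_of_add_mem hmem } with hW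
  have hle : Ideal.span {f | ∃ a, a ∉ Tlbar T l ∧ f = xmono a} ≤ W := by
    rw [Ideal.span_le]
    rintro f ⟨a, ha, rfl⟩
    intro m hm
    rw [xmono, support_monomial] at hm
    simp only [one_ne_zero, if_false, Finset.mem_singleton] at hm
    subst hm
    simpa using ha
  exact hle hx

end Supp

section Cover
variable {n : ℕ}

lemma cover_lemma (T : Set (Fin n → ℕ)) (K : AddSubgroup (Fin n → ℤ))
    (h1 : DownClosed T) (h2 : PropII K T) {a : Fin n → ℕ} (ha : a ∈ T) :
    ∃ L : Set (Fin n), (∃ r, IsStdPair T r L) ∧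
      ∀ b ∈ T, vtoZ a - vtoZ b ∈ K → b ∈ Tlbar T L := by
  classical
  set q : (Fin n → ℤ) ⧸ K := QuotientAddGroup.mk (vtoZ a) with hq
  set S : Set (Set (Fin n)) :=
    {l | ∃ c, (c ∈ T ∧ (QuotientAddGroup.mk (vtoZ c) : (Fin n → ℤ) ⧸ K) = q) ∧
      ∀ g : Fin n → ℕ, vsupp g ⊆ l → c + g ∈ T} with hS
  have hne : (∅ : Set (Fin n)) ∈ S := by
    refine ⟨a, ⟨ha, rfl⟩, ?_⟩
    intro g hg
    have : g = 0 := by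
      funext i
      by_contra h
      exact (hg h : i ∈ (∅ : Set (Fin n)))
    rw [this, add_zero]
    exact ha
  obtain ⟨L, hLS, hLmax⟩ := Set.Finite.exists_maximalFor id S (Set.toFinite S) ⟨∅, hne⟩
  -- Step A
  have hstepA : ∀ b, b ∈ T → (QuotientAddGroup.mk (vtoZ b) : (Fin n → ℤ) ⧸ K) = q →
      ∀ g : Fin n → ℕ, vsupp g ⊆ L → b + g ∈ T := by
    intro b hbT hbq g hg
    obtain ⟨c, hc, hcall⟩ := hLS
    rcases h2 g q with hemp | hsub
    · exfalso
      have hmem : g + c ∈ ((fun a => g + a) '' fiber K T q) ∩ T := by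
        refine ⟨⟨c, ⟨hc.1, hc.2⟩, rfl⟩, ?_⟩
        rw [add_comm]
        exact hcall g hg
      rw [hemp] at hmem
      exact hmem
    · have hmem : g + b ∈ (fun a => g + a) '' fiber K T q := ⟨b, ⟨hbT, hbq⟩, rfl⟩
      have := hsub hmem
      rwa [add_comm] at this
  -- Step B
  have hstdB : ∀ b, b ∈ T → (QuotientAddGroup.mk (vtoZ b) : (Fin n → ℤ) ⧸ K) = q →
      ∃ r, IsStdPair T r L ∧ b ∈ vslice r L := by
    intro b hbT hbq
    set rb : Fin n → ℕ := fun i => if i ∈ L then 0 else b i with hrb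
    set cb : Fin n → ℕ := fun i => if i ∈ L then b i else 0 with hcb
    have hbr : rb + cb = b := by
      funext i
      by_cases hi : i ∈ L <;> simp [rb, cb, Pi.add_apply, hi]
    have hcbcell : cb ∈ vcell L := by
      intro i hi
      by_contra h'
      simp only [cb, vsupp, Set.mem_setOf_eq, if_neg h', ne_eq, not_true_eq_false] at hi
    have hbmem : b ∈ vslice rb L := ⟨cb, hcbcell, hbr⟩
    have hdisj : Disjoint (vsupp rb) L := by
      rw [Set.disjoint_left]
      intro i hi hiL
      simp only [vsupp, Set.mem_setOf_eq, rb, if_pos hiL, ne_eq, not_true_eq_false] at hi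
    have hsliceT : vslice rb L ⊆ T := by
      rintro x ⟨d, hd, rfl⟩
      refine h1 (b + d) _ (fun i => ?_) (hstepA b hbT hbq d hd)
      by_cases hi : i ∈ L <;> simp [rb, Pi.add_apply, hi]
    refine ⟨rb, ⟨hdisj, hsliceT, ?_⟩, hbmem⟩
    intro r' l' hdisj' hsub' hince
    -- L ⊆ l'
    have hLl' : L ⊆ l' := by
      intro i hi
      by_contra hil'
      have h0 : rb ∈ vslice rb L := ⟨0, by intro j hj; exact absurd rfl hj, add_zero rb⟩
      set ei : Fin n → ℕ := fun j => if j = i then 1 else 0 with hei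
      have h1' : rb + ei ∈ vslice rb L := by
        refine ⟨ei, ?_, rfl⟩
        intro j hj
        simp only [vsupp, ei, Set.mem_setOf_eq] at hj
        by_cases hji : j = i
        · rwa [hji]
        · simp [hji] at hj
      obtain ⟨d1, hd1, he1⟩ := hince h0
      obtain ⟨d2, hd2, he2⟩ := hince h1'
      have hd1i : d1 i = 0 := by
        by_contra hne; exact hil' (hd1 hne)
      have hd2i : d2 i = 0 := by
        by_contra hne; exact hil' (hd2 hne)
      have e1 := congrFun he1 i
      have e2 := congrFun he2 i
      simp only [Pi.add_apply] at e1 e2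
      have hei1 : ei i = 1 := if_pos rfl
      omega
    -- l' ∈ S
    have hl'S : l' ∈ S := by
      obtain ⟨d, hd, he⟩ := hince hbmem
      have he' : r' + d = b := he
      refine ⟨b, ⟨hbT, hbq⟩, ?_⟩
      intro g hg
      apply hsub'
      refine ⟨d + g, ?_, ?_⟩
      · intro j hj
        simp only [vsupp, Pi.add_apply, Set.mem_setOf_eq] at hj
        by_cases hjd : d j = 0
        · by_cases hjg : g j = 0
          · omega
          · exact hg hjg
        · exact hd hjd
      · show r' + (d + g) = b + g
        rw [← add_assoc, he']
    have hLeq : L = l' := le_antisymm hLl' (hLmax hl'S hLl')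
    -- rb = r'
    obtain ⟨d, hd, he⟩ := hince ⟨0, by intro j hj; exact absurd rfl hj, add_zero rb⟩
    have hrbr' : rb = r' := by
      funext i
      by_cases hi : i ∈ L
      · have hr'0 : r' i = 0 := by
          by_contra h'
          exact (Set.disjoint_left.1 hdisj') (show i ∈ vsupp r' from h') (hLeq ▸ hi)
        simp [rb, if_pos hi, hr'0]
      · have hdi : d i = 0 := by
          by_contra hne
          exact hi (hLeq ▸ hd hne)
        have := congrFun he i
        simp only [Pi.add_apply, hdi, add_zero] at this
        omega
    rw [hrbr', hLeq]
  obtain ⟨r0, hr0, _⟩ := hstdB a ha rfl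
  refine ⟨L, ⟨r0, hr0⟩, ?_⟩
  intro b hbT hk
  have hbq : (QuotientAddGroup.mk (vtoZ b) : (Fin n → ℤ) ⧸ K) = q := by
    rw [hq]
    symm
    rw [QuotientAddGroup.eq]
    have : -vtoZ a + vtoZ b = -(vtoZ a - vtoZ b) := by ring
    rw [this]
    exact K.neg_mem hk
  obtain ⟨r, hstd, hmem⟩ := hstdB b hbT hbq
  exact ⟨r, r, fun i => le_refl _, hstd, hmem⟩

end Cover

section MainProof
variable {n : ℕ}

lemma main_ind (I : Ideal (MvPolynomial (Fin n) ℂ)) (hbin : IsBinomialIdeal I)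
    (h1 : DownClosed (TofI I)) (h2 : PropII (KofI I) (TofI I)) :
    ∀ (k : ℕ) (F : MvPolynomial (Fin n) ℂ), F.support.card ≤ k →
      F ∈ ⨅ l ∈ {l : Set (Fin n) | ∃ r, IsStdPair (TofI I) r l},
          (I ⊔ Ideal.span {f | ∃ a, a ∉ Tlbar (TofI I) l ∧ f = xmono a}) →
      (∀ m ∈ F.support, (⇑m : Fin n → ℕ) ∈ TofI I) → F ∈ I := by
  have hIle : I ≤ ⨅ l ∈ {l : Set (Fin n) | ∃ r, IsStdPair (TofI I) r l},
      (I ⊔ Ideal.span {f | ∃ a, a ∉ Tlbar (TofI I) l ∧ f = xmono a}) :=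
    le_iInf₂ fun l hl => le_sup_left
  intro k
  induction k with
  | zero =>
    intro F hcard _ _
    have h0 : F.support = ∅ := Finset.card_eq_zero.1 (Nat.le_zero.1 hcard)
    have : F = 0 := by
      rwa [← MvPolynomial.support_eq_empty]
    rw [this]; exact I.zero_mem
  | succ k ih =>
    intro F hcard hmem hsupp
    by_cases h0 : F = 0
    · rw [h0]; exact I.zero_mem
    obtain ⟨m0, hm0⟩ : F.support.Nonempty := MvPolynomial.support_nonempty.2 h0
    have ha0T : (⇑m0 : Fin n → ℕ) ∈ TofI I := hsupp m0 hm0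
    set C : Set (Fin n → ℕ) := {b | SimRel I ⇑m0 b} with hC
    obtain ⟨L, hLex, hLcov⟩ := cover_lemma (TofI I) (KofI I) h1 h2 ha0T
    have hCsub : C ⊆ Tlbar (TofI I) L := by
      rintro b ⟨hbT1, hbT2, la, lb, hla, hlb, hbin'⟩
      refine hLcov b hbT2 ?_
      exact AddSubgroup.subset_closure ⟨⇑m0, hbT1, b, hbT2, ⟨la, lb, hla, hlb, hbin'⟩, rfl⟩
    have hFL : F ∈ I ⊔ Ideal.span {f | ∃ a, a ∉ Tlbar (TofI I) L ∧ f = xmono a} := by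
      have h' := (Submodule.mem_iInf _).1 hmem L
      exact (Submodule.mem_iInf _).1 h' hLex
    obtain ⟨g, hgI, z, hz, hgz⟩ := Submodule.mem_sup.1 hFL
    have hrz : restr C z = 0 := by
      apply ext_coeff
      intro m
      rw [coeff_restr, coeff_zero]
      by_cases hc : (⇑m : Fin n → ℕ) ∈ C
      · rw [if_pos hc]
        by_contra hne
        exact support_span_xmono_notTlbar hz m (mem_support_iff.2 hne) (hCsub hc)
      · rw [if_neg hc]
    have hG : restr C F ∈ I := by
      rw [← hgz, restr_add, hrz, add_zero]
      exact restr_class_mem I hbin ⇑m0 hgI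
    have hFG : F - restr C F = restr Cᶜ F := by
      rw [sub_eq_iff_eq_add']
      exact (restr_compl_add C F).symm
    have hm0C : (⇑m0 : Fin n → ℕ) ∈ C := simRel_refl I ha0T
    have hsub : (F - restr C F).support ⊆ F.support.erase m0 := by
      intro m hm
      rw [hFG] at hm
      obtain ⟨hmc, hmF⟩ := mem_support_restr hm
      refine Finset.mem_erase.2 ⟨?_, hmF⟩
      rintro rfl
      exact hmc hm0C
    have hcard' : (F - restr C F).support.card ≤ k := by
      calc (F - restr C F).support.card ≤ (F.support.erase m0).card := Finset.card_le_card hsub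
        _ = F.support.card - 1 := Finset.card_erase_of_mem hm0
        _ ≤ k := by omega
    have hmem' : F - restr C F ∈ ⨅ l ∈ {l : Set (Fin n) | ∃ r, IsStdPair (TofI I) r l},
        (I ⊔ Ideal.span {f | ∃ a, a ∉ Tlbar (TofI I) l ∧ f = xmono a}) :=
      Submodule.sub_mem _ hmem (hIle hG)
    have hsupp' : ∀ m ∈ (F - restr C F).support, (⇑m : Fin n → ℕ) ∈ TofI I := by
      intro m hm
      rw [hFG] at hm
      exact hsupp m (mem_support_restr hm).2
    have hFGI : F - restr C F ∈ I := ih _ hcard' hmem' hsupp'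
    have : F = (F - restr C F) + restr C F := by ring
    rw [this]
    exact I.add_mem hFGI hG

end MainProof

/-- For a binomial ideal I satisfying (i) and (ii),
I = ⋂_ℓ I^(ℓ), the intersection over all ℓ occurring in standard pairs of T(I). -/
theorem stmt_7 {n : ℕ} (I : Ideal (MvPolynomial (Fin n) ℂ)) (hbin : IsBinomialIdeal I)
    (h1 : DownClosed (TofI I)) (h2 : PropII (KofI I) (TofI I)) :
    I = ⨅ l ∈ {l : Set (Fin n) | ∃ r, IsStdPair (TofI I) r l},
          (I ⊔ Ideal.span {f | ∃ a, a ∉ Tlbar (TofI I) l ∧ f = xmono a}) := by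
  apply le_antisymm
  · exact le_iInf₂ fun l hl => le_sup_left
  · intro F hF
    have hIle : I ≤ ⨅ l ∈ {l : Set (Fin n) | ∃ r, IsStdPair (TofI I) r l},
        (I ⊔ Ideal.span {f | ∃ a, a ∉ Tlbar (TofI I) l ∧ f = xmono a}) :=
      le_iInf₂ fun l hl => le_sup_left
    -- the part of F supported outside T is in I
    have hjunk : restr (TofI I)ᶜ F ∈ I := by
      rw [(restr (TofI I)ᶜ F).as_sum]
      apply Submodule.sum_mem
      intro m hm
      obtain ⟨hmc, _⟩ := mem_support_restr hm
      rw [monomial_eq_smul_xmono]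
      apply smulC_mem
      rw [Set.mem_compl_iff, TofI, Set.mem_setOf_eq, not_not] at hmc
      exact hmc
    have hTpart : restr (TofI I) F = F - restr (TofI I)ᶜ F := by
      rw [eq_sub_iff_add_eq]
      exact restr_compl_add (TofI I) F
    have hmemT : restr (TofI I) F ∈ ⨅ l ∈ {l : Set (Fin n) | ∃ r, IsStdPair (TofI I) r l},
        (I ⊔ Ideal.span {f | ∃ a, a ∉ Tlbar (TofI I) l ∧ f = xmono a}) := by
      rw [hTpart]
      exact Submodule.sub_mem _ hF (hIle hjunk)
    have hTmem : restr (TofI I) F ∈ I := by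
      apply main_ind I hbin h1 h2 (restr (TofI I) F).support.card _ le_rfl hmemT
      intro m hm
      exact (mem_support_restr hm).1
    have : F = restr (TofI I) F + restr (TofI I)ᶜ F := (restr_compl_add (TofI I) F).symm
    rw [this]
    exact I.add_mem hTmem hjunk
end

section
/- Let T ⊆ ℤ_{≥0}^n satisfy property (i) (if a, b ∈ ℤ_{≥0}^n with a − b ∈ ℤ_{≥0}^n and a ∈ T, then b ∈ T), and let ℓ ⊆ {1,…,n} occur in some standard pair (r, ℓ) ∈ B(T). Then ℓ is maximal among the subsets of {1,…,n} occurring in standard pairs of T containing ℓ if and only if (0, ℓ) ∈ B(T). -/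
open MvPolynomial

lemma vslice_zero {n : ℕ} (l : Set (Fin n)) : vslice 0 (l : Set (Fin n)) = vcell l := by
  ext a
  constructor
  · rintro ⟨b, hb, rfl⟩; simpa using hb
  · intro ha; exact ⟨a, ha, by simp⟩

lemma zero_mem_vcell {n : ℕ} (l : Set (Fin n)) : (0 : Fin n → ℕ) ∈ vcell l := by
  intro i hi
  simp [vsupp] at hi

lemma vcell_le {n : ℕ} {l m : Set (Fin n)} (h : vcell l ⊆ vcell m) : l ⊆ m := by
  intro i hi
  have ha : (fun j => if j = i then 1 else 0 : Fin n → ℕ) ∈ vcell l := by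
    intro j hj
    simp only [vsupp, Set.mem_setOf_eq] at hj
    by_cases hji : j = i
    · subst hji; exact hi
    · simp [hji] at hj
  have hm := h ha
  have : i ∈ vsupp (fun j => if j = i then 1 else 0 : Fin n → ℕ) := by
    simp [vsupp]
  exact hm this

lemma vcell_mono {n : ℕ} {l m : Set (Fin n)} (h : l ⊆ m) : vcell l ⊆ vcell m :=
  fun _ ha => ha.trans h

lemma vcell_subset_of_stdpair {n : ℕ} {T : Set (Fin n → ℕ)} (hT : DownClosed T)
    {s : Fin n → ℕ} {l : Set (Fin n)} (hs : vslice s l ⊆ T) : vcell l ⊆ T := by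
  intro a ha
  exact hT (s + a) a (fun i => Nat.le_add_left _ _) (hs ⟨a, ha, rfl⟩)

lemma eq_zero_of_zero_mem_vslice {n : ℕ} {s : Fin n → ℕ} {l : Set (Fin n)}
    (h : (0 : Fin n → ℕ) ∈ vslice s l) : s = 0 := by
  obtain ⟨a, _, ha⟩ := h
  funext i
  have := congrFun ha i
  simp only [Pi.add_apply, Pi.zero_apply] at this ⊢
  omega

/-- For downward closed T and ℓ occurring in a standard pair of T,
ℓ is maximal among subsets occurring in standard pairs iff (0, ℓ) ∈ B(T). -/
theorem stmt_10 {n : ℕ} (T : Set (Fin n → ℕ)) (hT : DownClosed T)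
    (l : Set (Fin n)) (hl : ∃ r, IsStdPair T r l) :
    (∀ l' : Set (Fin n), (∃ s, IsStdPair T s l') → l ⊆ l' → l' = l) ↔
      IsStdPair T 0 l := by
  obtain ⟨r, hr⟩ := hl
  have hcellT : vcell l ⊆ T := vcell_subset_of_stdpair hT hr.2.1
  constructor
  · intro hmax
    refine ⟨by simp [vsupp], by rw [vslice_zero]; exact hcellT, ?_⟩
    intro r' l' hdisj hsub hinc
    rw [vslice_zero] at hinc ⊢
    have hr0 : r' = 0 := eq_zero_of_zero_mem_vslice (hinc (zero_mem_vcell l))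
    subst hr0
    rw [vslice_zero] at hsub hinc ⊢
    have hll' : l ⊆ l' := vcell_le hinc
    -- find a maximal m ⊇ l' with vcell m ⊆ T
    set S : Set (Set (Fin n)) := {m | l' ⊆ m ∧ vcell m ⊆ T} with hS
    have hl'S : l' ∈ S := ⟨subset_rfl, hsub⟩
    obtain ⟨m, hmS, hmmax⟩ := Set.Finite.exists_maximalFor id S (Set.toFinite S)
      ⟨l', hl'S⟩
    have hstd : IsStdPair T 0 m := by
      refine ⟨by simp [vsupp], by rw [vslice_zero]; exact hmS.2, ?_⟩
      intro s m' hdisj' hsub' hinc'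
      rw [vslice_zero] at hinc' ⊢
      have hs0 : s = 0 := eq_zero_of_zero_mem_vslice (hinc' (zero_mem_vcell m))
      subst hs0
      rw [vslice_zero] at hsub' hinc' ⊢
      have hmm' : m ⊆ m' := vcell_le hinc'
      have : m' ∈ S := ⟨hmS.1.trans hmm', hsub'⟩
      have := hmmax this hmm'
      simp only [id] at this
      rw [le_antisymm hmm' this]
    have hml : m = l := hmax m ⟨0, hstd⟩ (hll'.trans hmS.1)
    have : l' = l := le_antisymm (hml ▸ hmS.1) hll'
    rw [this]
  · intro h0 l' hsp hll'
    obtain ⟨s, hs⟩ := hsp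
    have hcl' : vcell l' ⊆ T := vcell_subset_of_stdpair hT hs.2.1
    have := h0.2.2 0 l' (by simp [vsupp]) (by rw [vslice_zero]; exact hcl')
      (by rw [vslice_zero, vslice_zero]; exact vcell_mono hll')
    rw [vslice_zero, vslice_zero] at this
    exact le_antisymm (vcell_le this.ge) hll'
end

section
/- Let T ⊆ ℤ_{≥0}^n be an arbitrary subset satisfying property (i) (if a, b ∈ ℤ_{≥0}^n with a − b ∈ ℤ_{≥0}^n and a ∈ T, then b ∈ T). Then for two different standard pairs (r, ℓ), (s, m) ∈ B(T), the sets r + ℤ_{≥0}^ℓ and s + ℤ_{≥0}^m are either disjoint, or their intersection equals p + ℤ_{≥0}^{ℓ∩m} for some p ∈ ℤ_{≥0}^n, and in the latter case the inclusions ℓ∩m ⊂ ℓ and ℓ∩m ⊂ m are strict. -/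
/-!
A point `x` lies in `r + ℕ^ℓ` iff `r ≤ x` with equality off `ℓ`. A common point `x` of two slices
forces `r ⊔ s` to agree with `r` off `ℓ` and with `s` off `m`, so the intersection is
`(r ⊔ s) + ℕ^(ℓ ∩ m)`. If moreover `ℓ ⊆ m`, the same point gives `r + ℕ^ℓ ⊆ s + ℕ^m` (because `s`
vanishes on `m`), and maximality of the standard pair `(r, ℓ)` forces `(r, ℓ) = (s, m)`.
-/


open MvPolynomial

section Slices

variable {n : ℕ} {r s x : Fin n → ℕ} {l m : Set (Fin n)}

theorem mem_vslice_s11 : x ∈ vslice r l ↔ r ≤ x ∧ ∀ i ∉ l, x i = r i := by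
  constructor
  · rintro ⟨a, ha, rfl⟩
    refine ⟨fun i => Nat.le_add_right _ _, fun i hi => ?_⟩
    have : a i = 0 := not_not.1 fun h => hi (ha h)
    simp [this]
  · rintro ⟨hrx, hx⟩
    refine ⟨x - r, fun i hi => ?_, add_tsub_cancel_of_le hrx⟩
    by_contra hil
    exact hi (by simp [hx i hil])

theorem self_mem_vslice (r : Fin n → ℕ) (l : Set (Fin n)) : r ∈ vslice r l :=
  mem_vslice_s11.2 ⟨le_rfl, fun _ _ => rfl⟩

theorem le_of_vslice_subset (h : vslice r l ⊆ vslice s m) : s ≤ r :=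
  (mem_vslice_s11.1 (h (self_mem_vslice r l))).1

theorem subset_of_vslice_subset (h : vslice r l ⊆ vslice s m) : l ⊆ m := by
  intro i hil
  by_contra him
  have hr := (mem_vslice_s11.1 (h (self_mem_vslice r l))).2 i him
  have hstep : r + Pi.single i 1 ∈ vslice r l :=
    mem_vslice_s11.2 ⟨le_self_add, fun j hj => by simp [(ne_of_mem_of_not_mem hil hj).symm]⟩
  have := (mem_vslice_s11.1 (h hstep)).2 i him
  simp [hr] at this

theorem vslice_inj : vslice r l = vslice s m ↔ r = s ∧ l = m := by
  refine ⟨fun h => ⟨?_, ?_⟩, fun h => by rw [h.1, h.2]⟩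
  · exact le_antisymm (le_of_vslice_subset h.ge) (le_of_vslice_subset h.le)
  · exact subset_antisymm (subset_of_vslice_subset h.le) (subset_of_vslice_subset h.ge)

theorem vslice_inter_vslice (h : (vslice r l ∩ vslice s m).Nonempty) :
    vslice r l ∩ vslice s m = vslice (r ⊔ s) (l ∩ m) := by
  obtain ⟨x, hxr, hxs⟩ := h
  rw [mem_vslice_s11] at hxr hxs
  have hr : ∀ i ∉ l, (r ⊔ s) i = r i := fun i hi =>
    sup_eq_left.2 ((hxs.1 i).trans_eq (hxr.2 i hi))
  have hs : ∀ i ∉ m, (r ⊔ s) i = s i := fun i hi =>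
    sup_eq_right.2 ((hxr.1 i).trans_eq (hxs.2 i hi))
  ext y
  simp only [Set.mem_inter_iff, mem_vslice_s11, sup_le_iff]
  constructor
  · rintro ⟨⟨hry, hyr⟩, hsy, hys⟩
    refine ⟨⟨hry, hsy⟩, fun i hi => ?_⟩
    rcases not_and_or.1 hi with hi | hi
    · rw [hr i hi, hyr i hi]
    · rw [hs i hi, hys i hi]
  · rintro ⟨⟨hry, hsy⟩, hy⟩
    exact ⟨⟨hry, fun i hi => (hy i fun h => hi h.1).trans (hr i hi)⟩,
      hsy, fun i hi => (hy i fun h => hi h.2).trans (hs i hi)⟩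

theorem vslice_subset_vslice (h : (vslice r l ∩ vslice s m).Nonempty)
    (hs : Disjoint (vsupp s) m) (hlm : l ⊆ m) : vslice r l ⊆ vslice s m := by
  obtain ⟨x, hxr, hxs⟩ := h
  rw [mem_vslice_s11] at hxr hxs
  intro y hy
  rw [mem_vslice_s11] at hy ⊢
  have hys : ∀ i ∉ m, y i = s i := fun i him =>
    have hil : i ∉ l := fun h => him (hlm h)
    (hy.2 i hil).trans ((hxr.2 i hil).symm.trans (hxs.2 i him))
  refine ⟨fun i => ?_, hys⟩
  by_cases him : i ∈ m
  · have : s i = 0 := not_not.1 fun h => Set.disjoint_left.1 hs h him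
    simp [this]
  · exact (hys i him).ge

theorem IsStdPair.eq_of_vslice_subset {T : Set (Fin n → ℕ)} (hrl : IsStdPair T r l)
    (hsm : IsStdPair T s m) (h : vslice r l ⊆ vslice s m) : (r, l) = (s, m) := by
  obtain ⟨rfl, rfl⟩ := vslice_inj.1 (hrl.2.2 s m hsm.1 hsm.2.1 h)
  rfl

theorem IsStdPair.inter_ssubset_left {T : Set (Fin n → ℕ)} (hrl : IsStdPair T r l)
    (hsm : IsStdPair T s m) (hne : (r, l) ≠ (s, m)) (h : (vslice r l ∩ vslice s m).Nonempty) :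
    l ∩ m ⊂ l :=
  Set.inter_subset_left.ssubset_of_not_subset fun hl =>
    hne (hrl.eq_of_vslice_subset hsm (vslice_subset_vslice h hsm.1 fun _ hi => (hl hi).2))

end Slices

theorem stmt_11_general {n : ℕ} (T : Set (Fin n → ℕ))
    (r s : Fin n → ℕ) (l m : Set (Fin n))
    (hrl : IsStdPair T r l) (hsm : IsStdPair T s m) (hne : (r, l) ≠ (s, m)) :
    vslice r l ∩ vslice s m = ∅ ∨
      ∃ p : Fin n → ℕ, vslice r l ∩ vslice s m = vslice p (l ∩ m) ∧
        l ∩ m ⊂ l ∧ l ∩ m ⊂ m := by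
  refine (vslice r l ∩ vslice s m).eq_empty_or_nonempty.imp id fun h => ?_
  have h' : (vslice s m ∩ vslice r l).Nonempty := Set.inter_comm _ _ ▸ h
  refine ⟨r ⊔ s, vslice_inter_vslice h, hrl.inter_ssubset_left hsm hne h, ?_⟩
  rw [Set.inter_comm]
  exact hsm.inter_ssubset_left hrl (Ne.symm hne) h'

/-- Two different standard pairs are disjoint or intersect in a set
p + ℤ_{≥0}^{ℓ∩m}, with ℓ∩m strictly contained in both ℓ and m. -/
theorem stmt_11 {n : ℕ} (T : Set (Fin n → ℕ)) (hT : DownClosed T)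
    (r s : Fin n → ℕ) (l m : Set (Fin n))
    (hrl : IsStdPair T r l) (hsm : IsStdPair T s m) (hne : (r, l) ≠ (s, m)) :
    vslice r l ∩ vslice s m = ∅ ∨
      ∃ p : Fin n → ℕ, vslice r l ∩ vslice s m = vslice p (l ∩ m) ∧
        l ∩ m ⊂ l ∧ l ∩ m ⊂ m :=
  stmt_11_general T r s l m hrl hsm hne
end
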